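/- Let I be a 3-CNF instance with m clauses and n variables, let ε ∈ (0,1), and let J be the {0,1}-action linear influence game constructed from I and ε as described. Then at every pure-strategy Nash equilibrium of J, every clause player plays 1, and moreover for every clause k there exists a variable i ∈ V_k whose player's action x_i equals l_{k,i} (so the variable players' actions, read as a truth assignment, satisfy every clause). -/

import Mathlib

/-! Under a {0,1}-valued assignment, the term `(2 l - 1) x_i + (1 - l)` is the truth value of the
literal of `i` in clause `k`, so the net input of clause player `k` is (number of true literals)
`- 1 + ε`: a clause player plays 1 exactly when its clause is satisfied. For a variable player `i`,
each clause `k ∋ i` then contributes `x_k - 1` to its signed net input, so an unsatisfied clause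
containing `i` gives it a strictly profitable deviation. -/

open Finset

/-- A pure-strategy Nash equilibrium of a `{0,1}`-action linear influence game. -/
def IsPSNE01 {P : Type*} [Fintype P] [DecidableEq P]
    (w : P → P → ℝ) (b : P → ℝ) (x : P → ℝ) : Prop :=
  (∀ p, x p = 0 ∨ x p = 1) ∧
    ∀ p, (2 * x p - 1) * ((∑ q ∈ univ.filter (· ≠ p), w q p * x q) - b p) ≥ 0

/-- Weights of the `{0,1}`-action LIG built from a 3-CNF instance. -/
def threeSatW (n m : ℕ) (V : Fin m → Finset (Fin n)) (l : Fin m → Fin n → ℝ) :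
    Fin m ⊕ Fin n → Fin m ⊕ Fin n → ℝ
  | Sum.inl k, Sum.inr i => if i ∈ V k then 1 - 2 * l k i else 0
  | Sum.inr i, Sum.inl k => if i ∈ V k then 2 * l k i - 1 else 0
  | _, _ => 0

/-- Thresholds of the `{0,1}`-action LIG built from a 3-CNF instance. -/
def threeSatB (n m : ℕ) (V : Fin m → Finset (Fin n)) (l : Fin m → Fin n → ℝ) (ε : ℝ) :
    Fin m ⊕ Fin n → ℝ
  | Sum.inl k => 1 - ε - ∑ i ∈ V k, (1 - l k i)
  | Sum.inr i => ∑ k ∈ univ.filter (fun k => i ∈ V k), (1 - 2 * l k i)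

namespace IsPSNE01

variable {P : Type*} [Fintype P] [DecidableEq P] {w : P → P → ℝ} {b : P → ℝ} {x : P → ℝ}

lemma eq_one_of_pos (hx : IsPSNE01 w b x) {p : P}
    (h : 0 < (∑ q ∈ univ.filter (· ≠ p), w q p * x q) - b p) : x p = 1 :=
  (hx.1 p).resolve_left fun h0 => by nlinarith [hx.2 p, h0]

lemma eq_zero_of_neg (hx : IsPSNE01 w b x) {p : P}
    (h : (∑ q ∈ univ.filter (· ≠ p), w q p * x q) - b p < 0) : x p = 0 :=
  (hx.1 p).resolve_right fun h1 => by nlinarith [hx.2 p, h1]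

end IsPSNE01

lemma literal_value {a c : ℝ} (ha : a = 0 ∨ a = 1) (hc : c = 0 ∨ c = 1) :
    (2 * c - 1) * a + (1 - c) = if a = c then 1 else 0 := by
  rcases ha with rfl | rfl <;> rcases hc with rfl | rfl <;> norm_num

lemma signed_clause_contribution_eq {a c l : ℝ} (ha : a = 0 ∨ a = 1) (hc : c = 0 ∨ c = 1)
    (hl : l = 0 ∨ l = 1) (h : c = 0 → a ≠ l) :
    (2 * a - 1) * ((1 - 2 * l) * (c - 1)) = -(1 - c) := by
  rcases ha with rfl | rfl <;> rcases hc with rfl | rfl <;> rcases hl with rfl | rfl <;>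
    (try norm_num at h) <;> norm_num

section ThreeSat

variable {n m : ℕ} {V : Fin m → Finset (Fin n)} {l : Fin m → Fin n → ℝ} {ε : ℝ}
  {x : Fin m ⊕ Fin n → ℝ}

lemma threeSatW_sum_clause (k : Fin m) :
    ∑ q ∈ univ.filter (· ≠ Sum.inl k), threeSatW n m V l q (Sum.inl k) * x q
      = ∑ i ∈ V k, (2 * l k i - 1) * x (Sum.inr i) := by
  rw [filter_ne', sum_erase _ (by simp [threeSatW]), Fintype.sum_sum_type]
  simp [threeSatW, ite_mul, sum_ite_mem]

lemma threeSatW_sum_var (i : Fin n) :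
    ∑ q ∈ univ.filter (· ≠ Sum.inr i), threeSatW n m V l q (Sum.inr i) * x q
      = ∑ k ∈ univ.filter (fun k => i ∈ V k), (1 - 2 * l k i) * x (Sum.inl k) := by
  rw [filter_ne', sum_erase _ (by simp [threeSatW]), Fintype.sum_sum_type]
  simp [threeSatW, ite_mul, sum_filter]

lemma threeSat_clause_input (hl : ∀ k i, l k i = 0 ∨ l k i = 1)
    (hx : ∀ i, x (Sum.inr i) = 0 ∨ x (Sum.inr i) = 1) (k : Fin m) :
    (∑ q ∈ univ.filter (· ≠ Sum.inl k), threeSatW n m V l q (Sum.inl k) * x q)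
        - threeSatB n m V l ε (Sum.inl k)
      = #{i ∈ V k | x (Sum.inr i) = l k i} - 1 + ε := by
  have hcount : ∑ i ∈ V k, ((2 * l k i - 1) * x (Sum.inr i) + (1 - l k i))
      = #{i ∈ V k | x (Sum.inr i) = l k i} := by
    simp only [literal_value (hx _) (hl k _), sum_boole]
  rw [threeSatW_sum_clause, threeSatB, ← hcount, sum_add_distrib]
  ring

lemma threeSat_var_input (i : Fin n) :
    (∑ q ∈ univ.filter (· ≠ Sum.inr i), threeSatW n m V l q (Sum.inr i) * x q)
        - threeSatB n m V l ε (Sum.inr i)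
      = ∑ k ∈ univ.filter (fun k => i ∈ V k), (1 - 2 * l k i) * (x (Sum.inl k) - 1) := by
  simp only [threeSatW_sum_var, threeSatB, ← sum_sub_distrib, mul_sub, mul_one]

lemma threeSat_psne_clause_eq_one_iff (hl : ∀ k i, l k i = 0 ∨ l k i = 1)
    (hε0 : 0 < ε) (hε1 : ε < 1) (hx : IsPSNE01 (threeSatW n m V l) (threeSatB n m V l ε) x)
    (k : Fin m) : x (Sum.inl k) = 1 ↔ ∃ i ∈ V k, x (Sum.inr i) = l k i := by
  have hinput := threeSat_clause_input (V := V) (ε := ε) hl (fun i => hx.1 (Sum.inr i)) k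
  by_cases hsat : ∃ i ∈ V k, x (Sum.inr i) = l k i
  · have hcard : (1 : ℝ) ≤ #{i ∈ V k | x (Sum.inr i) = l k i} := by
      exact_mod_cast card_pos.2 (filter_nonempty_iff.2 hsat)
    exact iff_of_true (hx.eq_one_of_pos (by linarith)) hsat
  · have hcard : #{i ∈ V k | x (Sum.inr i) = l k i} = 0 :=
      card_eq_zero.2 (filter_eq_empty_iff.2 fun i hi h => hsat ⟨i, hi, h⟩)
    rw [hcard, Nat.cast_zero] at hinput
    have hk0 := hx.eq_zero_of_neg (p := Sum.inl k) (by linarith)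
    exact iff_of_false (by simp [hk0]) hsat

lemma threeSat_psne_clause_satisfied (hV : ∀ k, (V k).Nonempty)
    (hl : ∀ k i, l k i = 0 ∨ l k i = 1) (hε0 : 0 < ε) (hε1 : ε < 1)
    (hx : IsPSNE01 (threeSatW n m V l) (threeSatB n m V l ε) x) (k : Fin m) :
    ∃ i ∈ V k, x (Sum.inr i) = l k i := by
  by_contra hunsat
  obtain ⟨i, hi⟩ := hV k
  have hclause := threeSat_psne_clause_eq_one_iff hl hε0 hε1 hx
  have hterm : ∀ k' ∈ univ.filter (fun k' => i ∈ V k'),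
      (2 * x (Sum.inr i) - 1) * ((1 - 2 * l k' i) * (x (Sum.inl k') - 1))
        = -(1 - x (Sum.inl k')) := by
    intro k' hk'
    refine signed_clause_contribution_eq (hx.1 _) (hx.1 _) (hl k' i) fun hk'_zero hsat => ?_
    have := (hclause k').2 ⟨i, (mem_filter.1 hk').2, hsat⟩
    linarith
  have hk0 : x (Sum.inl k) = 0 := (hx.1 _).resolve_right (mt (hclause k).1 hunsat)
  have hcount : 0 < ∑ k' ∈ univ.filter (fun k' => i ∈ V k'), (1 - x (Sum.inl k')) :=
    sum_pos' (fun k' _ => by rcases hx.1 (Sum.inl k') with h | h <;> rw [h] <;> norm_num)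
      ⟨k, by simp [hi], by simp [hk0]⟩
  have hbest := hx.2 (Sum.inr i)
  rw [threeSat_var_input, mul_sum, sum_congr rfl hterm, sum_neg_distrib] at hbest
  linarith

end ThreeSat

/-- At every PSNE of the LIG built from a 3-CNF instance, every clause player
plays 1, and for every clause some variable in it takes the action matching its literal sign,
so the variable players' actions form a satisfying truth assignment. -/
theorem threeSat_lig_psne_clauses_play_one (n m : ℕ)
    (V : Fin m → Finset (Fin n)) (hV : ∀ k, (V k).card = 3)
    (l : Fin m → Fin n → ℝ) (hl : ∀ k i, l k i = 0 ∨ l k i = 1)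
    (ε : ℝ) (hε0 : 0 < ε) (hε1 : ε < 1)
    (x : Fin m ⊕ Fin n → ℝ)
    (hx : IsPSNE01 (threeSatW n m V l) (threeSatB n m V l ε) x) :
    (∀ k : Fin m, x (Sum.inl k) = 1) ∧
    (∀ k : Fin m, ∃ i ∈ V k, x (Sum.inr i) = l k i) := by
  have hne : ∀ k, (V k).Nonempty := fun k => card_pos.1 (by rw [hV k]; norm_num)
  have hsat := threeSat_psne_clause_satisfied hne hl hε0 hε1 hx
  exact ⟨fun k => (threeSat_psne_clause_eq_one_iff hl hε0 hε1 hx k).2 (hsat k), hsat⟩
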